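/- arXiv:2503.02339 — 4 statements merged into one kernel-verified Lean document; each statement's English description precedes it below -/
import Mathlib

section
/- Let ε ≥ 3, β ∈ ℝ \ {−2,−1}, and suppose reals e⁻_i (2 ≤ i ≤ ε), e⁺_i (1 ≤ i ≤ ε−1), all ≠ 1, and mutually distinct reals θ*_0,…,θ*_ε satisfy the equalities e⁻_i(β+2) = 1 + (β+1)(θ*_{i−1} − θ*_{i−2})/(θ*_{i−1} − θ*_i) and e⁺_i(β+2) = 1 + (β+1)(θ*_i − θ*_{i+1})/(θ*_i − θ*_{i−1}) in their respective ranges. Then β + 1 = (e⁻_{i+1} − 1)(e⁺_i − 1)/(1 − e⁺_i e⁻_{i+1}) for 1 ≤ i ≤ ε−1, and θ*_{i+1} = θ*_1 + (θ*_1 − θ*_0)·∑_{j=1}^{i} (−1)^j ∏_{k=1}^{j} F(k), where F(k) = −(e⁺_k − 1)/(e⁻_{k+1} − 1). -/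
theorem stmt_5 (ε : ℕ) (hε : 3 ≤ ε)
    (θ : ℕ → ℝ) (hθ : ∀ i j : ℕ, i ≤ ε → j ≤ ε → θ i = θ j → i = j)
    (em ep : ℕ → ℝ) (β : ℝ) (hβ2 : β ≠ -2) (hβ1 : β ≠ -1)
    (hem1 : ∀ i : ℕ, 2 ≤ i → i ≤ ε → em i ≠ 1)
    (hep1 : ∀ i : ℕ, 1 ≤ i → i ≤ ε - 1 → ep i ≠ 1)
    (hem : ∀ i : ℕ, 2 ≤ i → i ≤ ε →
      em i * (β + 2) = 1 + (β + 1) * (θ (i - 1) - θ (i - 2)) / (θ (i - 1) - θ i))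
    (hep : ∀ i : ℕ, 1 ≤ i → i ≤ ε - 1 →
      ep i * (β + 2) = 1 + (β + 1) * (θ i - θ (i + 1)) / (θ i - θ (i - 1)))
    (F : ℕ → ℝ)
    (hF : ∀ k : ℕ, 1 ≤ k → k ≤ ε - 1 → F k = -(ep k - 1) / (em (k + 1) - 1)) :
    (∀ i : ℕ, 1 ≤ i → i ≤ ε - 1 →
      β + 1 = (em (i + 1) - 1) * (ep i - 1) / (1 - ep i * em (i + 1))) ∧
    (∀ i : ℕ, 1 ≤ i → i ≤ ε - 1 →
      θ (i + 1) = θ 1 + (θ 1 - θ 0) *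
        ∑ j ∈ Finset.Icc 1 i, (-1 : ℝ) ^ j * ∏ k ∈ Finset.Icc 1 j, F k) := by
  have hβ2' : β + 2 ≠ 0 := fun h => hβ2 (by linarith)
  have hβ1' : β + 1 ≠ 0 := fun h => hβ1 (by linarith)
  -- key algebraic facts: explicit formulas for ep i and em (i+1)
  have key : ∀ i : ℕ, 1 ≤ i → i ≤ ε - 1 →
      ep i = 1 + (β + 1) * (θ (i - 1) - θ (i + 1)) / ((β + 2) * (θ i - θ (i - 1))) ∧
      em (i + 1) = 1 + (β + 1) * (θ (i + 1) - θ (i - 1)) / ((β + 2) * (θ i - θ (i + 1))) := by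
    intro i h1 h2
    have hi1 : i + 1 ≤ ε := by omega
    have hba : θ i - θ (i - 1) ≠ 0 := by
      refine sub_ne_zero.mpr fun h => ?_
      have := hθ i (i - 1) (by omega) (by omega) h; omega
    have hbc : θ i - θ (i + 1) ≠ 0 := by
      refine sub_ne_zero.mpr fun h => ?_
      have := hθ i (i + 1) (by omega) (by omega) h; omega
    have hA : (β + 2) * (θ i - θ (i - 1)) ≠ 0 := mul_ne_zero hβ2' hba
    have hB : (β + 2) * (θ i - θ (i + 1)) ≠ 0 := mul_ne_zero hβ2' hbc
    have e1 := hep i h1 h2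
    have e2 := hem (i + 1) (by omega) hi1
    have h11 : i + 1 - 1 = i := by omega
    have h21 : i + 1 - 2 = i - 1 := by omega
    rw [h11, h21] at e2
    have k1 : (ep i - 1) * ((β + 2) * (θ i - θ (i - 1))) =
        (β + 1) * (θ (i - 1) - θ (i + 1)) := by
      field_simp at e1
      linear_combination e1
    have k2 : (em (i + 1) - 1) * ((β + 2) * (θ i - θ (i + 1))) =
        (β + 1) * (θ (i + 1) - θ (i - 1)) := by
      field_simp at e2
      linear_combination e2
    constructor
    · have := (div_eq_iff hA).mpr k1.symm
      linarith [this]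
    · have := (div_eq_iff hB).mpr k2.symm
      linarith [this]
  have hac : ∀ i : ℕ, 1 ≤ i → i ≤ ε - 1 → θ (i - 1) - θ (i + 1) ≠ 0 := by
    intro i h1 h2
    refine sub_ne_zero.mpr fun h => ?_
    have := hθ (i - 1) (i + 1) (by omega) (by omega) h; omega
  constructor
  · intro i h1 h2
    obtain ⟨hP, hM⟩ := key i h1 h2
    have hba : θ i - θ (i - 1) ≠ 0 := by
      refine sub_ne_zero.mpr fun h => ?_
      have := hθ i (i - 1) (by omega) (by omega) h; omega
    have hbc : θ i - θ (i + 1) ≠ 0 := by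
      refine sub_ne_zero.mpr fun h => ?_
      have := hθ i (i + 1) (by omega) (by omega) h; omega
    have hA : (β + 2) * (θ i - θ (i - 1)) ≠ 0 := mul_ne_zero hβ2' hba
    have hB : (β + 2) * (θ i - θ (i + 1)) ≠ 0 := mul_ne_zero hβ2' hbc
    have hac' := hac i h1 h2
    have hval : 1 - ep i * em (i + 1) =
        -((β + 1) * (θ (i - 1) - θ (i + 1)) ^ 2) /
          (((β + 2) * (θ i - θ (i - 1))) * ((β + 2) * (θ i - θ (i + 1)))) := by
      rw [hP, hM]
      field_simp
      ring
    have hden : 1 - ep i * em (i + 1) ≠ 0 := by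
      rw [hval]
      exact div_ne_zero
        (neg_ne_zero.mpr (mul_ne_zero hβ1' (pow_ne_zero 2 hac')))
        (mul_ne_zero hA hB)
    rw [eq_div_iff hden, hval, hP, hM]
    field_simp
    ring
  · -- step relation
    have hstep : ∀ k : ℕ, 1 ≤ k → k ≤ ε - 1 →
        θ (k + 1) - θ k = -(F k * (θ k - θ (k - 1))) := by
      intro k h1 h2
      obtain ⟨hP, hM⟩ := key k h1 h2
      have hba : θ k - θ (k - 1) ≠ 0 := by
        refine sub_ne_zero.mpr fun h => ?_
        have := hθ k (k - 1) (by omega) (by omega) h; omega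
      have hbc : θ k - θ (k + 1) ≠ 0 := by
        refine sub_ne_zero.mpr fun h => ?_
        have := hθ k (k + 1) (by omega) (by omega) h; omega
      have hA : (β + 2) * (θ k - θ (k - 1)) ≠ 0 := mul_ne_zero hβ2' hba
      have hB : (β + 2) * (θ k - θ (k + 1)) ≠ 0 := mul_ne_zero hβ2' hbc
      have hac' := hac k h1 h2
      have hm : em (k + 1) - 1 ≠ 0 :=
        sub_ne_zero.mpr (hem1 (k + 1) (by omega) (by omega))
      have hFk : F k = (θ k - θ (k + 1)) / (θ k - θ (k - 1)) := by
        rw [hF k h1 h2, div_eq_div_iff hm hba, hP, hM]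
        field_simp
        ring
      rw [hFk]
      field_simp
      ring
    -- induction
    intro i h1
    -- auxiliary: the difference formula
    have hdiff : ∀ j : ℕ, 1 ≤ j → j ≤ ε - 1 →
        θ (j + 1) - θ j = (-1 : ℝ) ^ j * (∏ k ∈ Finset.Icc 1 j, F k) * (θ 1 - θ 0) := by
      intro j hj1
      induction j, hj1 using Nat.le_induction with
      | base =>
        intro _
        have := hstep 1 le_rfl (by omega)
        simp only [Finset.Icc_self, Finset.prod_singleton, pow_one]
        norm_num at this ⊢
        linarith [this]
      | succ j hj ihj =>
        intro hj2
        have hs := hstep (j + 1) (by omega) hj2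
        have h11 : j + 1 - 1 = j := by omega
        rw [h11] at hs
        have hj' := ihj (by omega)
        rw [Finset.prod_Icc_succ_top (by omega : 1 ≤ j + 1), hs, hj']
        ring
    induction i, h1 using Nat.le_induction with
    | base =>
      intro _
      have := hdiff 1 le_rfl (by omega)
      simp only [Finset.Icc_self, Finset.sum_singleton, Finset.prod_singleton, pow_one] at this ⊢
      linarith [this]
    | succ i hi ih =>
      intro h2
      have hih := ih (by omega)
      have hd := hdiff (i + 1) (by omega) h2
      rw [Finset.sum_Icc_succ_top (by omega : 1 ≤ i + 1)]
      rw [hih] at hd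
      linarith [hd]
end

section
/- Fix a prime power b > 1, integers D ≥ 1, d with 0 ≤ d ≤ D, and a real e. Define x_i = −b^{D+e}·(b^{i−d−1} − 1)(b^i − 1)/(b−1)² for 1 ≤ i ≤ d. Then for each 1 ≤ i ≤ d, e⁻·x_{i−1} + x_i·1 + e⁺·x_{i+1}·(appropriate boundary conventions) satisfies the tridiagonal system: e⁻ x_{i−1} + x_i + e⁺ x_{i+1} = f, where e⁻ = −b²/(b+1), e⁺ = −b⁻¹/(b+1), f = b^{e+D−1}, with the conventions x_0 = 0 and x_{d+1} = 0 interpreted via e⁻₁ = 0 and e⁺ at i = d contributing 0. -/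
theorem stmt_14 (b : ℝ) (hb : 1 < b) (D d : ℕ) (hD : 1 ≤ D) (hd : d ≤ D) (e : ℝ)
    (x : ℕ → ℝ) (hx0 : x 0 = 0) (hxd1 : x (d + 1) = 0)
    (hx : ∀ i : ℕ, 1 ≤ i → i ≤ d →
      x i = -(b ^ ((D : ℝ) + e)) * (b ^ ((i : ℝ) - (d : ℝ) - 1) - 1) * ((b : ℝ) ^ (i : ℝ) - 1)
        / (b - 1) ^ 2)
    (em ep f : ℝ)
    (hem : em = -b ^ 2 / (b + 1)) (hep : ep = -b⁻¹ / (b + 1))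
    (hf : f = b ^ (e + (D : ℝ) - 1)) :
    ∀ i : ℕ, 1 ≤ i → i ≤ d → em * x (i - 1) + x i + ep * x (i + 1) = f := by
  have hb0 : (0 : ℝ) < b := lt_trans one_pos hb
  have hbne : b ≠ 0 := ne_of_gt hb0
  have hb1 : b - 1 ≠ 0 := sub_ne_zero.mpr (ne_of_gt hb)
  have hbp1 : b + 1 ≠ 0 := by nlinarith
  -- the formula also holds at 0 and d+1
  have hF : ∀ j : ℕ, j ≤ d + 1 →
      x j = -(b ^ ((D : ℝ) + e)) * (b ^ ((j : ℝ) - (d : ℝ) - 1) - 1) * ((b : ℝ) ^ (j : ℝ) - 1)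
        / (b - 1) ^ 2 := by
    intro j hj
    rcases Nat.eq_zero_or_pos j with h0 | hpos
    · subst h0
      simp [hx0, Real.rpow_natCast]
    · rcases Nat.lt_or_ge j (d + 1) with hlt | hge
      · exact hx j hpos (Nat.lt_succ_iff.mp hlt)
      · have hjeq : j = d + 1 := le_antisymm hj hge
        subst hjeq
        have : ((d : ℝ) + 1) - (d : ℝ) - 1 = 0 := by ring
        rw [hxd1]
        push_cast
        rw [this, Real.rpow_zero]
        ring
  intro i h1 hid
  have hi1 : ((i - 1 : ℕ) : ℝ) = (i : ℝ) - 1 := by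
    have := Nat.cast_sub h1 (R := ℝ)
    simpa using this
  rw [hF (i - 1) (by omega), hF i (by omega), hF (i + 1) (by omega), hi1, hem, hep, hf]
  push_cast
  have hsd : b ^ ((d : ℝ)) ≠ 0 := ne_of_gt (Real.rpow_pos_of_pos hb0 _)
  simp only [sub_sub, ← Real.rpow_natCast b, show ((i:ℝ) - 1 - ((d:ℝ) + 1)) = (i:ℝ) - (1 + ((d:ℝ) + 1)) by ring,
    show ((i:ℝ) + 1 - ((d:ℝ) + 1)) = (i:ℝ) + 1 - ((d:ℝ) + 1) from rfl]
  rw [show (e + (D:ℝ) - 1) = e + (D:ℝ) - 1 from rfl]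
  simp only [Real.rpow_sub hb0, Real.rpow_add hb0, Real.rpow_one]
  field_simp
  simp only [Real.rpow_natCast]
  ring
end

section
/- Let b > 1 be real, D, d, e as above, and let M be the (d+1)×(d+1) real tridiagonal matrix with zero diagonal, all superdiagonal entries equal to 1, and subdiagonal entries x_i = −b^{D+e}(b^{i−d−1} − 1)(b^i − 1)/(b−1)² for 1 ≤ i ≤ d. Then the eigenvalues of M are exactly the d+1 distinct numbers (b^{(D+e)/2}/(b−1))·(b^{d/2−j} − b^{j−d/2}) for 0 ≤ j ≤ d; in particular M is diagonalizable with one-dimensional eigenspaces. -/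
set_option maxHeartbeats 1000000

open Finset

namespace Stmt15

variable (w c : ℝ) (d : ℕ)

/-- q-binomial-like product -/
noncomputable def Qp (k m : ℕ) : ℝ :=
  ∏ i ∈ range m, ((w ^ (2*(k-i)) - 1) / (w ^ (2*(i+1)) - 1))

noncomputable def Rp (m n : ℕ) : ℝ :=
  ∏ i ∈ range n, (w ^ (2*(d-m-i)) - 1)

noncomputable def cf (k m : ℕ) : ℝ :=
  if m ≤ k then c^(k-m) * Qp w k m * Rp w d m (k-m) / w ^ ((k-m)*(d+1-(k-m))) else 0

noncomputable def nu (m : ℕ) : ℝ := c * (w ^ (2*(d-m)) - w ^ (2*m)) / w ^ d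

noncomputable def XX (k : ℕ) : ℝ := -(c^2) * (w ^ (2*k) / w ^ (2*(d+1)) - 1) * (w ^ (2*k) - 1)

noncomputable def phi (m j : ℕ) : ℝ := ∏ i ∈ range m, (nu w c d j - nu w c d i)

noncomputable def vv (k j : ℕ) : ℝ := ∑ m ∈ range (k+1), cf w c d k m * phi w c d m j

variable {w c d}

section basic
variable (hw : 1 < w)
include hw

lemma hw0 : w ≠ 0 := by positivity

lemma pow_sub_one_ne (n : ℕ) (hn : n ≠ 0) : w ^ n - 1 ≠ 0 :=
  sub_ne_zero.2 (ne_of_gt (one_lt_pow₀ hw hn))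

lemma Qp_ne_zero {k m : ℕ} (hm : m ≤ k) : Qp w k m ≠ 0 := by
  unfold Qp
  apply Finset.prod_ne_zero_iff.2
  intro i hi
  simp only [mem_range] at hi
  exact div_ne_zero (pow_sub_one_ne hw _ (by omega)) (pow_sub_one_ne hw _ (by omega))

lemma Rp_ne_zero {m n : ℕ} (h : m + n ≤ d) : Rp w d m n ≠ 0 := by
  unfold Rp
  apply Finset.prod_ne_zero_iff.2
  intro i hi
  simp only [mem_range] at hi
  exact pow_sub_one_ne hw _ (by omega)

lemma cf_ne_zero (hc : c ≠ 0) {k m : ℕ} (hm : m ≤ k) (hk : k ≤ d) : cf w c d k m ≠ 0 := by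
  unfold cf
  rw [if_pos hm]
  exact div_ne_zero (mul_ne_zero (mul_ne_zero (pow_ne_zero _ hc) (Qp_ne_zero hw hm))
    (Rp_ne_zero hw (by omega))) (pow_ne_zero _ (hw0 hw))

omit hw in
/-- telescoping: `Qp (k+1) m * (w^(2(k+1-m)) - 1) = Qp k m * (w^(2(k+1)) - 1)` for m ≤ k -/
lemma Qp_succ_left {k m : ℕ} (hm : m ≤ k) :
    Qp w (k+1) m * (w ^ (2*(k+1-m)) - 1) = Qp w k m * (w ^ (2*(k+1)) - 1) := by
  induction m with
  | zero => simp [Qp]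
  | succ m ih =>
    have ihm := ih (by omega)
    unfold Qp at *
    rw [Finset.prod_range_succ, Finset.prod_range_succ,
      show 2*(k+1-(m+1)) = 2*(k-m) from by omega]
    linear_combination ((w ^ (2*(k-m)) - 1) / (w ^ (2*(m+1)) - 1)) * ihm

omit hw in
lemma Rp_succ (m n : ℕ) : Rp w d m (n+1) = Rp w d m n * (w ^ (2*(d-m-n)) - 1) :=
  Finset.prod_range_succ _ _

omit hw in
lemma Rp_shift (m n : ℕ) : Rp w d m (n+1) = (w ^ (2*(d-m)) - 1) * Rp w d (m+1) n := by
  unfold Rp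
  rw [Finset.prod_range_succ']
  have h0 : d - m - 0 = d - m := by omega
  rw [h0, mul_comm]
  congr 1
  apply Finset.prod_congr rfl
  intro i _
  congr 3
  omega

lemma Qp_diag (k : ℕ) : Qp w k k = 1 := by
  unfold Qp
  rw [Finset.prod_div_distrib]
  have h : ∏ i ∈ range k, (w ^ (2*(k-i)) - 1) = ∏ i ∈ range k, (w ^ (2*(i+1)) - 1) := by
    rw [← Finset.prod_range_reflect]
    apply Finset.prod_congr rfl
    intro i hi
    simp only [mem_range] at hi
    congr 2
    omega
  rw [h, div_self]
  exact Finset.prod_ne_zero_iff.2 fun i _ => pow_sub_one_ne hw _ (by omega)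

end basic

lemma cf_eq {k m n : ℕ} (h : k = m + n) :
    cf w c d k m = c^n * Qp w k m * Rp w d m n / w ^ (n*(d+1-n)) := by
  subst h
  unfold cf
  rw [if_pos (by omega), show m+n-m = n from by omega]

section key
variable (hw : 1 < w) (hc : c ≠ 0)
include hw hc

/-- generic case of the coefficient identity: `k = m+2+u`, `d = k+t`. -/
lemma key_gen (m u t : ℕ) :
    cf w c (m+2+u+t) (m+2+u+1) (m+1)
      = cf w c (m+2+u+t) (m+2+u) m
        + nu w c (m+2+u+t) (m+1) * cf w c (m+2+u+t) (m+2+u) (m+1)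
        - XX w c (m+2+u+t) (m+2+u) * cf w c (m+2+u+t) (m+1+u) (m+1) := by
  have hne : ∀ a : ℕ, a ≠ 0 → w ^ a - 1 ≠ 0 := fun a ha => pow_sub_one_ne hw a ha
  have hQ1 : Qp w (m+2+u+1) (m+1)
      = Qp w (m+2+u) (m+1) * (w ^ (2*(m+2+u+1)) - 1) / (w ^ (2*(u+2)) - 1) := by
    have h := Qp_succ_left (w := w) (k := m+2+u) (m := m+1) (by omega)
    rw [show 2*(m+2+u+1-(m+1)) = 2*(u+2) from by omega] at h
    exact (eq_div_iff (hne _ (by omega))).2 h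
  have hQ2 : Qp w (m+2+u) m
      = Qp w (m+2+u) (m+1) * (w ^ (2*(m+1)) - 1) / (w ^ (2*(u+2)) - 1) := by
    have h : Qp w (m+2+u) (m+1)
        = Qp w (m+2+u) m * ((w ^ (2*(m+2+u-m)) - 1) / (w ^ (2*(m+1)) - 1)) := by
      unfold Qp; exact Finset.prod_range_succ _ m
    rw [show 2*(m+2+u-m) = 2*(u+2) from by omega] at h
    rw [h]
    have hA := hne (2*(u+2)) (by omega)
    have hB := hne (2*(m+1)) (by omega)
    field_simp
    try ring
  have hQ3 : Qp w (m+1+u) (m+1)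
      = Qp w (m+2+u) (m+1) * (w ^ (2*(u+1)) - 1) / (w ^ (2*(m+2+u)) - 1) := by
    have h := Qp_succ_left (w := w) (k := m+1+u) (m := m+1) (by omega)
    rw [show m+1+u+1 = m+2+u from by omega] at h
    rw [show 2*(m+2+u-(m+1)) = 2*(u+1) from by omega] at h
    exact (eq_div_iff (hne _ (by omega))).2 h.symm
  have hR1 : Rp w (m+2+u+t) (m+1) (u+1)
      = Rp w (m+2+u+t) (m+1) u * (w ^ (2*(t+1)) - 1) := by
    have h := Rp_succ (w := w) (d := m+2+u+t) (m+1) u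
    rwa [show 2*(m+2+u+t-(m+1)-u) = 2*(t+1) from by omega] at h
  have hR2 : Rp w (m+2+u+t) (m+1) (u+2)
      = Rp w (m+2+u+t) (m+1) u * (w ^ (2*(t+1)) - 1) * (w ^ (2*t) - 1) := by
    have h := Rp_succ (w := w) (d := m+2+u+t) (m+1) (u+1)
    rw [show u+1+1 = u+2 from by omega, show 2*(m+2+u+t-(m+1)-(u+1)) = 2*t from by omega,
      hR1] at h
    exact h
  have hR3 : Rp w (m+2+u+t) m (u+2)
      = (w ^ (2*(u+t+2)) - 1) * (Rp w (m+2+u+t) (m+1) u * (w ^ (2*(t+1)) - 1)) := by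
    have h := Rp_shift (w := w) (d := m+2+u+t) m (u+1)
    rw [show u+1+1 = u+2 from by omega, show 2*(m+2+u+t-m) = 2*(u+t+2) from by omega,
      hR1] at h
    exact h
  rw [cf_eq (show m+2+u+1 = (m+1) + (u+2) from by omega),
      cf_eq (show m+2+u = m + (u+2) from by omega),
      cf_eq (show m+2+u = (m+1) + (u+1) from by omega),
      cf_eq (show m+1+u = (m+1) + u from by omega),
      hQ1, hQ2, hQ3, hR2, hR1, hR3]
  unfold nu XX
  rw [show m+2+u+t+1-(u+2) = m+t+1 from by omega, show m+2+u+t+1-(u+1) = m+t+2 from by omega,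
    show m+2+u+t+1-u = m+t+3 from by omega, show 2*(m+2+u+t-(m+1)) = 2*(u+t+1) from by omega,
    show 2*(m+2+u+t+1) = 2*(m+2+u+t)+2 from by omega]
  have h1 := hne (2*(u+2)) (by omega)
  have h2 := hne (2*(m+2+u)) (by omega)
  have h3 : (w:ℝ) ≠ 0 := hw0 hw
  field_simp
  ring

omit hc in
lemma cf_diag (k : ℕ) : cf w c d k k = 1 := by
  rw [cf_eq (show k = k + 0 from rfl), Qp_diag hw]
  simp [Rp]

omit hw hc in
lemma cf_zero {k m : ℕ} (h : k < m) : cf w c d k m = 0 := by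
  unfold cf
  rw [if_neg (by omega)]

/-- m = 0 case: `k = u+1`, `d = k + t`. -/
lemma key_zero (u t : ℕ) :
    cf w c (u+1+t) (u+2) 0
      = nu w c (u+1+t) 0 * cf w c (u+1+t) (u+1) 0
        - XX w c (u+1+t) (u+1) * cf w c (u+1+t) u 0 := by
  have hne : ∀ a : ℕ, a ≠ 0 → w ^ a - 1 ≠ 0 := fun a ha => pow_sub_one_ne hw a ha
  have hR1 : Rp w (u+1+t) 0 (u+1) = Rp w (u+1+t) 0 u * (w ^ (2*(t+1)) - 1) := by
    have h := Rp_succ (w := w) (d := u+1+t) 0 u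
    rwa [show 2*(u+1+t-0-u) = 2*(t+1) from by omega] at h
  have hR2 : Rp w (u+1+t) 0 (u+2) = Rp w (u+1+t) 0 u * (w ^ (2*(t+1)) - 1) * (w ^ (2*t) - 1) := by
    have h := Rp_succ (w := w) (d := u+1+t) 0 (u+1)
    rw [show u+1+1 = u+2 from by omega, show 2*(u+1+t-0-(u+1)) = 2*t from by omega, hR1] at h
    exact h
  rw [cf_eq (show u+2 = 0 + (u+2) from by omega),
      cf_eq (show u+1 = 0 + (u+1) from by omega),
      cf_eq (show u = 0 + u from by omega),
      hR2, hR1]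
  unfold nu XX Qp
  rw [show u+1+t+1-(u+2) = t from by omega, show u+1+t+1-(u+1) = t+1 from by omega,
    show u+1+t+1-u = t+2 from by omega, show 2*(u+1+t-0) = 2*(u+1+t) from by omega,
    show 2*(u+1+t+1) = 2*(u+1+t)+2 from by omega]
  have h3 : (w:ℝ) ≠ 0 := hw0 hw
  simp only [Finset.range_zero, Finset.prod_empty]
  field_simp
  ring

/-- m = k case: `k = m+1`, `d = k + t`. -/
lemma key_diag (m t : ℕ) :
    cf w c (m+1+t) (m+2) (m+1)
      = cf w c (m+1+t) (m+1) m
        + nu w c (m+1+t) (m+1) * cf w c (m+1+t) (m+1) (m+1)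
        - XX w c (m+1+t) (m+1) * cf w c (m+1+t) m (m+1) := by
  have hne : ∀ a : ℕ, a ≠ 0 → w ^ a - 1 ≠ 0 := fun a ha => pow_sub_one_ne hw a ha
  have hQ1 : Qp w (m+2) (m+1) = (w ^ (2*(m+2)) - 1) / (w ^ 2 - 1) := by
    have h := Qp_succ_left (w := w) (k := m+1) (m := m+1) (by omega)
    rw [show 2*(m+1+1-(m+1)) = 2 from by omega, Qp_diag hw, one_mul] at h
    exact (eq_div_iff (hne 2 (by omega))).2 (by rw [show m+1+1 = m+2 from rfl] at h; exact h)
  have hQ2 : Qp w (m+1) m = (w ^ (2*(m+1)) - 1) / (w ^ 2 - 1) := by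
    have h : Qp w (m+1) (m+1) = Qp w (m+1) m * ((w ^ (2*(m+1-m)) - 1) / (w ^ (2*(m+1)) - 1)) := by
      unfold Qp; exact Finset.prod_range_succ _ m
    rw [Qp_diag hw, show 2*(m+1-m) = 2 from by omega] at h
    rw [eq_div_iff (hne 2 (by omega))]
    have hB := hne (2*(m+1)) (by omega)
    field_simp at h ⊢
    linarith [h]
  rw [cf_diag hw, cf_zero (show m < m+1 from by omega),
      cf_eq (show m+2 = (m+1) + 1 from by omega),
      cf_eq (show m+1 = m + 1 from rfl),
      hQ1, hQ2]
  unfold nu Rp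
  rw [show m+1+t+1-1 = m+1+t from by omega]
  simp only [Finset.prod_range_one]
  rw [show 2*(m+1+t-(m+1)-0) = 2*t from by omega, show 2*(m+1+t-m-0) = 2*(t+1) from by omega,
    show 2*(m+1+t-(m+1)) = 2*t from by omega]
  have h3 : (w:ℝ) ≠ 0 := hw0 hw
  have h2 := hne 2 (by omega)
  field_simp
  ring

/-- assembled identity, `m+1` form, for `1 ≤ k ≤ d`. -/
lemma keyS {k : ℕ} (hk1 : 1 ≤ k) (hkd : k ≤ d) (m : ℕ) :
    cf w c d (k+1) (m+1)
      = cf w c d k m + nu w c d (m+1) * cf w c d k (m+1)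
        - XX w c d k * cf w c d (k-1) (m+1) := by
  rcases lt_trichotomy (m+1) k with h | h | h
  · obtain ⟨u, rfl⟩ : ∃ u, k = m+2+u := ⟨k-(m+2), by omega⟩
    obtain ⟨t, rfl⟩ : ∃ t, d = m+2+u+t := ⟨d-(m+2+u), by omega⟩
    rw [show m+2+u-1 = m+1+u from by omega]
    exact key_gen hw hc m u t
  · obtain rfl : k = m+1 := h.symm
    obtain ⟨t, rfl⟩ : ∃ t, d = m+1+t := ⟨d-(m+1), by omega⟩
    rw [show m+1-1 = m from by omega, show m+1+1 = m+2 from rfl]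
    exact key_diag hw hc m t
  · rcases Nat.eq_or_lt_of_le h with h' | h'
    · have hm : m = k := by omega
      subst hm
      rw [cf_diag hw, cf_diag hw, cf_zero (show m < m+1 from by omega),
        cf_zero (show m-1 < m+1 from by omega)]
      ring
    · rw [cf_zero (show k+1 < m+1 from by omega), cf_zero (show k < m from by omega),
        cf_zero (show k < m+1 from by omega), cf_zero (show k-1 < m+1 from by omega)]
      ring

/-- assembled identity, `m = 0` form, for `1 ≤ k ≤ d`. -/
lemma key0 {k : ℕ} (hk1 : 1 ≤ k) (hkd : k ≤ d) :
    cf w c d (k+1) 0 = nu w c d 0 * cf w c d k 0 - XX w c d k * cf w c d (k-1) 0 := by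
  obtain ⟨u, rfl⟩ : ∃ u, k = u+1 := ⟨k-1, by omega⟩
  obtain ⟨t, rfl⟩ : ∃ t, d = u+1+t := ⟨d-(u+1), by omega⟩
  rw [show u+1-1 = u from by omega, show u+1+1 = u+2 from rfl]
  exact key_zero hw hc u t
end key

section vvsec
variable (hw : 1 < w) (hc : c ≠ 0)
include hw

omit hw in
lemma phi_succ (m j : ℕ) :
    phi w c d (m+1) j = phi w c d m j * (nu w c d j - nu w c d m) :=
  Finset.prod_range_succ _ _

omit hw in
lemma phi_vanish {m j : ℕ} (h : j < m) : phi w c d m j = 0 :=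
  Finset.prod_eq_zero (Finset.mem_range.2 h) (by simp)

omit hc in
lemma vv_zero (j : ℕ) : vv w c d 0 j = 1 := by
  unfold vv phi
  simp [cf_diag hw]

omit hc in
lemma vv_one (j : ℕ) : vv w c d 1 j = nu w c d j := by
  unfold vv
  rw [Finset.sum_range_succ, Finset.sum_range_one, cf_diag hw, phi_succ]
  have h10 : cf w c d 1 0 = nu w c d 0 := by
    rw [cf_eq (show 1 = 0 + 1 from rfl)]
    unfold Qp Rp nu
    simp only [Finset.range_zero, Finset.prod_empty, Finset.prod_range_one]
    rw [show d - 0 - 0 = d from by omega, show d - 0 = d from by omega,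
      show 1*(d+1-1) = d from by omega]
    ring
  unfold phi
  simp only [Finset.range_zero, Finset.prod_empty, h10]
  ring

lemma cf_top {m : ℕ} (hm : m ≤ d) : cf w c d (d+1) m = 0 := by
  rw [cf_eq (show d+1 = m + (d+1-m) from by omega)]
  have : Rp w d m (d+1-m) = 0 := by
    apply Finset.prod_eq_zero (i := d - m) (Finset.mem_range.2 (by omega))
    rw [show 2*(d-m-(d-m)) = 0 from by omega]
    simp
  rw [this]
  ring

omit hw in
include hc in
lemma vv_rec {k : ℕ} (hk1 : 1 ≤ k) (hkd : k ≤ d) (hw : 1 < w) (j : ℕ) :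
    vv w c d (k+1) j = nu w c d j * vv w c d k j - XX w c d k * vv w c d (k-1) j := by
  have e1 : vv w c d (k+1) j
      = (∑ m ∈ range (k+1), (cf w c d k m * phi w c d (m+1) j
          + nu w c d (m+1) * cf w c d k (m+1) * phi w c d (m+1) j
          - XX w c d k * cf w c d (k-1) (m+1) * phi w c d (m+1) j))
        + (nu w c d 0 * cf w c d k 0 * phi w c d 0 j
          - XX w c d k * cf w c d (k-1) 0 * phi w c d 0 j) := by
    unfold vv
    rw [Finset.sum_range_succ' (fun m => cf w c d (k+1) m * phi w c d m j) (k+1)]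
    congr 1
    · apply Finset.sum_congr rfl
      intro m _
      rw [keyS hw hc hk1 hkd m]
      ring
    · rw [key0 hw hc hk1 hkd]
      ring
  have e2 : (∑ m ∈ range (k+1), nu w c d (m+1) * cf w c d k (m+1) * phi w c d (m+1) j)
      + nu w c d 0 * cf w c d k 0 * phi w c d 0 j
      = ∑ m ∈ range (k+1), nu w c d m * cf w c d k m * phi w c d m j := by
    rw [← Finset.sum_range_succ' (fun m => nu w c d m * cf w c d k m * phi w c d m j) (k+1),
      Finset.sum_range_succ]
    rw [cf_zero (show k < k+1 from by omega)]
    ring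
  have e3 : (∑ m ∈ range (k+1), XX w c d k * cf w c d (k-1) (m+1) * phi w c d (m+1) j)
      + XX w c d k * cf w c d (k-1) 0 * phi w c d 0 j
      = XX w c d k * vv w c d (k-1) j := by
    rw [← Finset.sum_range_succ' (fun m => XX w c d k * cf w c d (k-1) m * phi w c d m j) (k+1),
      Finset.sum_range_succ]
    rw [cf_zero (show k-1 < k+1 from by omega)]
    unfold vv
    rw [show k-1+1 = k from by omega, Finset.sum_range_succ,
      cf_zero (show k-1 < k from by omega), Finset.mul_sum]
    simp [mul_assoc]
  have e5 : nu w c d j * vv w c d k j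
      = (∑ m ∈ range (k+1), cf w c d k m * phi w c d (m+1) j)
        + ∑ m ∈ range (k+1), nu w c d m * cf w c d k m * phi w c d m j := by
    unfold vv
    rw [Finset.mul_sum, ← Finset.sum_add_distrib]
    apply Finset.sum_congr rfl
    intro m _
    rw [phi_succ]
    ring
  rw [e1, Finset.sum_sub_distrib, Finset.sum_add_distrib, e5]
  linarith [e2, e3]
end vvsec

section final
variable (hw : 1 < w) (hc : c ≠ 0)
include hw

lemma vv_top {j : ℕ} (hj : j ≤ d) : vv w c d (d+1) j = 0 := by
  unfold vv
  rw [Finset.sum_range_succ, cf_diag hw, phi_vanish (show j < d+1 from by omega)]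
  rw [Finset.sum_eq_zero, mul_zero, add_zero]
  intro m hm
  rw [cf_top hw (by simp at hm; omega)]
  ring
end final

end Stmt15

open Stmt15 in
theorem stmt_15 (b : ℝ) (hb : 1 < b) (D d : ℕ) (hD : 1 ≤ D) (hd : d ≤ D) (e : ℝ)
    (x : ℕ → ℝ)
    (hx : ∀ i : ℕ,
      x i = -(b ^ ((D : ℝ) + e)) * (b ^ ((i : ℝ) - (d : ℝ) - 1) - 1) * (b ^ (i : ℝ) - 1)
        / (b - 1) ^ 2)
    (M : Matrix (Fin (d + 1)) (Fin (d + 1)) ℝ)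
    (hM : ∀ k l : Fin (d + 1), M k l =
      if (l : ℕ) = (k : ℕ) + 1 then 1
      else if (k : ℕ) = (l : ℕ) + 1 then x (k : ℕ) else 0)
    (eig : Fin (d + 1) → ℝ)
    (heig : ∀ j : Fin (d + 1), eig j =
      b ^ (((D : ℝ) + e) / 2) / (b - 1) *
        (b ^ ((d : ℝ) / 2 - (j : ℝ)) - b ^ ((j : ℝ) - (d : ℝ) / 2))) :
    Function.Injective eig ∧
    (∀ μ : ℝ, Module.End.HasEigenvalue (Matrix.toLin' M) μ ↔ ∃ j, μ = eig j) ∧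
    ∃ P : Matrix (Fin (d + 1)) (Fin (d + 1)) ℝ,
      IsUnit P.det ∧ M = P * Matrix.diagonal eig * P⁻¹ := by
  have hb0 : (0:ℝ) < b := lt_trans one_pos hb
  have hb1 : b - 1 ≠ 0 := sub_ne_zero.2 (ne_of_gt hb)
  set w : ℝ := b ^ ((1:ℝ)/2) with hwdef
  set c : ℝ := b ^ (((D:ℝ)+e)/2) / (b-1) with hcdef
  have hw : 1 < w := by
    rw [hwdef]
    exact (Real.one_lt_rpow_iff_of_pos hb0).2 (Or.inl ⟨hb, by norm_num⟩)
  have hc0 : 0 < c := div_pos (Real.rpow_pos_of_pos hb0 _) (by linarith)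
  have hc : c ≠ 0 := ne_of_gt hc0
  have hwpow : ∀ n : ℕ, w ^ n = b ^ ((n:ℝ)/2) := by
    intro n
    rw [hwdef, ← Real.rpow_natCast (b ^ ((1:ℝ)/2)) n, ← Real.rpow_mul hb0.le]
    congr 1
    ring
  have hc2 : c^2 = b ^ ((D:ℝ)+e) / (b-1)^2 := by
    rw [hcdef, div_pow]
    congr 1
    rw [← Real.rpow_natCast (b ^ (((D:ℝ)+e)/2)) 2, ← Real.rpow_mul hb0.le]
    congr 1
    push_cast
    ring
  -- bridge XX = x
  have hXeq : ∀ i : ℕ, XX w c d i = x i := by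
    intro i
    rw [hx i, XX, hwpow, hwpow, hc2]
    rw [show ((2*i : ℕ):ℝ)/2 = (i:ℝ) from by push_cast; ring,
      show ((2*(d+1) : ℕ):ℝ)/2 = (d:ℝ)+1 from by push_cast; ring,
      ← Real.rpow_sub hb0,
      show (i:ℝ) - ((d:ℝ)+1) = (i:ℝ) - (d:ℝ) - 1 from by ring]
    field_simp
  -- bridge nu = eig
  have hnueq : ∀ j : Fin (d+1), nu w c d (j:ℕ) = eig j := by
    intro j
    have hjd : (j:ℕ) ≤ d := by omega
    rw [heig, nu, hwpow, hwpow, hwpow]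
    rw [show ((2*(d-(j:ℕ)) : ℕ):ℝ)/2 = (d:ℝ) - (j:ℕ) from by
        push_cast [Nat.cast_sub hjd]; ring,
      show ((2*(j:ℕ) : ℕ):ℝ)/2 = ((j:ℕ):ℝ) from by push_cast; ring]
    rw [mul_div_assoc, sub_div, ← Real.rpow_sub hb0, ← Real.rpow_sub hb0,
      show (d:ℝ) - ((j:ℕ):ℝ) - (d:ℝ)/2 = (d:ℝ)/2 - ((j:ℕ):ℝ) from by ring]
  -- the eigenvectors
  set u : Fin (d+1) → Fin (d+1) → ℝ := fun j k => vv w c d (k:ℕ) (j:ℕ) with hudef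
  have hmv : ∀ j : Fin (d+1), M.mulVec (u j) = eig j • u j := by
    intro j
    funext k
    have hjd : (j:ℕ) ≤ d := by omega
    have hexp : M.mulVec (u j) k = ∑ l, M k l * u j l := by
      simp [Matrix.mulVec, dotProduct]
    have hMl : ∀ l : Fin (d+1), M k l * u j l
        = (if (l:ℕ) = (k:ℕ)+1 then vv w c d ((k:ℕ)+1) (j:ℕ) else 0)
          + (if (k:ℕ) = (l:ℕ)+1 then XX w c d (k:ℕ) * vv w c d ((l:ℕ)) (j:ℕ) else 0) := by
      intro l
      by_cases h1 : (l:ℕ) = (k:ℕ)+1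
      · rw [hM k l, if_pos h1, if_pos h1, if_neg (show ¬(k:ℕ) = (l:ℕ)+1 from by omega),
          one_mul, add_zero, hudef]
        simp only
        rw [h1]
      · by_cases h2 : (k:ℕ) = (l:ℕ)+1
        · rw [hM k l, if_neg h1, if_pos h2, if_neg h1, if_pos h2, ← hXeq, hudef, zero_add]
        · rw [hM k l, if_neg h1, if_neg h2, if_neg h1, if_neg h2, zero_mul, add_zero]
    have hA : (∑ l : Fin (d+1), if (l:ℕ) = (k:ℕ)+1 then vv w c d ((k:ℕ)+1) (j:ℕ) else 0)
        = if (k:ℕ) < d then vv w c d ((k:ℕ)+1) (j:ℕ) else 0 := by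
      by_cases hlt : (k:ℕ) < d
      · rw [if_pos hlt, Finset.sum_eq_single (⟨(k:ℕ)+1, by omega⟩ : Fin (d+1))]
        · simp
        · intro l _ hl
          rw [if_neg (fun hc' => hl (Fin.ext (by simpa using hc')))]
        · intro h; exact absurd (Finset.mem_univ _) h
      · rw [if_neg hlt, Finset.sum_eq_zero]
        intro l _
        rw [if_neg (by omega)]
    have hB : (∑ l : Fin (d+1), if (k:ℕ) = (l:ℕ)+1 then XX w c d (k:ℕ) * vv w c d ((l:ℕ)) (j:ℕ) else 0)
        = if 1 ≤ (k:ℕ) then XX w c d (k:ℕ) * vv w c d ((k:ℕ)-1) (j:ℕ) else 0 := by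
      by_cases h1 : 1 ≤ (k:ℕ)
      · rw [if_pos h1, Finset.sum_eq_single (⟨(k:ℕ)-1, by omega⟩ : Fin (d+1))]
        · rw [if_pos (by simp; omega)]
        · intro l _ hl
          rw [if_neg (fun hc' => hl (Fin.ext (by simp; omega)))]
        · intro h; exact absurd (Finset.mem_univ _) h
      · rw [if_neg h1, Finset.sum_eq_zero]
        intro l _
        rw [if_neg (by omega)]
    rw [hexp]
    simp_rw [hMl]
    rw [Finset.sum_add_distrib, hA, hB, Pi.smul_apply, smul_eq_mul, ← hnueq j]
    show _ = nu w c d (j:ℕ) * vv w c d ((k:ℕ)) (j:ℕ)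
    rcases Nat.eq_zero_or_pos (k:ℕ) with hk0 | hk1
    · rcases Nat.eq_zero_or_pos d with hd0 | hd1
      · have hj0 : (j:ℕ) = 0 := by omega
        rw [if_neg (show ¬(k:ℕ) < d from by omega),
          if_neg (show ¬1 ≤ (k:ℕ) from by omega), hk0, hj0, hd0, vv_zero hw, nu]
        norm_num
      · rw [if_pos (show (k:ℕ) < d from by omega),
          if_neg (show ¬1 ≤ (k:ℕ) from by omega), hk0]
        norm_num [vv_one hw, vv_zero hw]
    · by_cases hkd : (k:ℕ) < d
      · rw [if_pos (show (k:ℕ) < d from hkd), if_pos (show 1 ≤ (k:ℕ) from hk1)]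
        have hrec := vv_rec hc (show 1 ≤ (k:ℕ) from hk1) (le_of_lt hkd) hw (j:ℕ)
        linarith
      · have hkeq : (k:ℕ) = d := by omega
        rw [if_neg (show ¬(k:ℕ) < d from by omega), if_pos (show 1 ≤ (k:ℕ) from hk1), hkeq]
        have hrec := vv_rec hc (show 1 ≤ d from by omega) (le_refl d) hw (j:ℕ)
        have htop := vv_top hw (show (j:ℕ) ≤ d from hjd) (c := c)
        linarith
  -- eigenvectors nonzero
  have hunz : ∀ j, u j ≠ 0 := by
    intro j h
    have := congrFun h 0
    rw [hudef] at this
    simp only [Pi.zero_apply] at this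
    rw [show ((0 : Fin (d+1)):ℕ) = 0 from rfl, vv_zero hw] at this
    exact one_ne_zero this
  have hev : ∀ j : Fin (d+1), Module.End.HasEigenvector (Matrix.toLin' M) (eig j) (u j) := by
    intro j
    refine ⟨Module.End.mem_eigenspace_iff.2 ?_, hunz j⟩
    rw [Matrix.toLin'_apply, hmv j]
  -- injectivity of eig
  have hinj : Function.Injective eig := by
    have hmono : StrictMono (fun t : ℝ => b ^ t - b ^ (-t)) := by
      have h1 : StrictMono (fun t : ℝ => b ^ t) :=
        fun s t h => (Real.rpow_lt_rpow_left_iff hb).2 h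
      have h2 : StrictMono (fun t : ℝ => -(b ^ (-t))) := by
        intro s t h
        simp only [neg_lt_neg_iff]
        exact (Real.rpow_lt_rpow_left_iff hb).2 (by linarith)
      exact fun s t h => by
        have := h1 h; have := h2 h
        simp only at *
        linarith
    intro j1 j2 h
    rw [heig j1, heig j2] at h
    have hC : b ^ (((D:ℝ)+e)/2) / (b-1) ≠ 0 := hc
    have h' : b ^ ((d:ℝ)/2 - (j1:ℝ)) - b ^ ((j1:ℝ) - (d:ℝ)/2)
        = b ^ ((d:ℝ)/2 - (j2:ℝ)) - b ^ ((j2:ℝ) - (d:ℝ)/2) := mul_left_cancel₀ hC h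
    have h'' := hmono.injective (a₁ := (d:ℝ)/2 - (j1:ℝ)) (a₂ := (d:ℝ)/2 - (j2:ℝ)) (by
      simpa [show -((d:ℝ)/2 - (j1:ℝ)) = (j1:ℝ) - (d:ℝ)/2 from by ring,
        show -((d:ℝ)/2 - (j2:ℝ)) = (j2:ℝ) - (d:ℝ)/2 from by ring] using h')
    have : (j1:ℝ) = (j2:ℝ) := by linarith
    exact Fin.ext (Nat.cast_injective this)
  -- the matrix P
  set P : Matrix (Fin (d+1)) (Fin (d+1)) ℝ := Matrix.of (fun k j => u j k) with hPdef
  have hli : LinearIndependent ℝ u :=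
    Module.End.eigenvectors_linearIndependent' (Matrix.toLin' M) eig hinj u hev
  have hcard : Fintype.card (Fin (d+1)) = Module.finrank ℝ (Fin (d+1) → ℝ) := by
    simp [Module.finrank_fin_fun]
  have hPdet : IsUnit P.det := by
    set bE := basisOfLinearIndependentOfCardEqFinrank hli hcard with hbE
    have hPeq : P = (Pi.basisFun ℝ (Fin (d+1))).toMatrix ⇑bE := by
      ext k j
      rw [Module.Basis.toMatrix_apply, hbE, coe_basisOfLinearIndependentOfCardEqFinrank,
        Pi.basisFun_repr]
      rfl
    rw [hPeq]
    have := Module.Basis.invertibleToMatrix (Pi.basisFun ℝ (Fin (d+1))) bE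
    exact Matrix.isUnit_det_of_invertible _
  have hMP : M * P = P * Matrix.diagonal eig := by
    ext k j
    rw [Matrix.mul_diagonal]
    have : (M * P) k j = M.mulVec (u j) k := by
      simp [Matrix.mul_apply, Matrix.mulVec, dotProduct, hPdef]
    rw [this, hmv j]
    simp [hPdef, mul_comm]
  have hMeq : M = P * Matrix.diagonal eig * P⁻¹ := by
    have hPP : P * P⁻¹ = 1 := Matrix.mul_nonsing_inv P hPdet
    calc M = M * (P * P⁻¹) := by rw [hPP, Matrix.mul_one]
    _ = M * P * P⁻¹ := by rw [Matrix.mul_assoc]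
    _ = P * Matrix.diagonal eig * P⁻¹ := by rw [hMP]
  refine ⟨hinj, ?_, P, hPdet, hMeq⟩
  intro μ
  constructor
  · intro hμ
    rw [Module.End.hasEigenvalue_iff, Submodule.ne_bot_iff] at hμ
    obtain ⟨v, hv, hvnz⟩ := hμ
    rw [Module.End.mem_eigenspace_iff, Matrix.toLin'_apply] at hv
    set y := P⁻¹.mulVec v with hydef
    have hPy : P.mulVec y = v := by
      rw [hydef, Matrix.mulVec_mulVec, Matrix.mul_nonsing_inv P hPdet, Matrix.one_mulVec]
    have hD : P⁻¹ * M * P = Matrix.diagonal eig := by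
      rw [hMeq]
      simp only [Matrix.mul_assoc]
      rw [Matrix.nonsing_inv_mul P hPdet, Matrix.mul_one, ← Matrix.mul_assoc,
        Matrix.nonsing_inv_mul P hPdet, Matrix.one_mul]
    have hDy : (Matrix.diagonal eig).mulVec y = μ • y := by
      calc (Matrix.diagonal eig).mulVec y = (P⁻¹ * M * P).mulVec y := by rw [hD]
      _ = (P⁻¹ * M).mulVec (P.mulVec y) := (Matrix.mulVec_mulVec y (P⁻¹ * M) P).symm
      _ = (P⁻¹ * M).mulVec v := by rw [hPy]
      _ = P⁻¹.mulVec (M.mulVec v) := (Matrix.mulVec_mulVec v P⁻¹ M).symm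
      _ = P⁻¹.mulVec (μ • v) := by rw [hv]
      _ = μ • P⁻¹.mulVec v := Matrix.mulVec_smul P⁻¹ μ v
      _ = μ • y := rfl
    have hynz : y ≠ 0 := by
      intro h
      rw [h, Matrix.mulVec_zero] at hPy
      exact hvnz hPy.symm
    obtain ⟨i, hi⟩ := Function.ne_iff.1 hynz
    refine ⟨i, ?_⟩
    have := congrFun hDy i
    rw [Matrix.mulVec_diagonal] at this
    simp only [Pi.smul_apply, smul_eq_mul, Pi.zero_apply] at this hi
    exact (mul_right_cancel₀ hi this).symm
  · rintro ⟨j, rfl⟩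
    exact Module.End.hasEigenvalue_of_hasEigenvector (hev j)
end

section
/- Let b > 1, D ≥ 1, e real, β = b + b⁻¹, ρ = b^{e+D−1}(b + b⁻¹ + 2), and θ_i = (b^{(D+e)/2}/(b−1))(b^{(D−i)/2} − b^{(i−D)/2}) for 0 ≤ i ≤ 2D. Then for all 0 ≤ i, j ≤ 2D with |i − j| ∉ {0, 2}, the quantity (θ_i − θ_j)(θ_i² + θ_j² − βθ_iθ_j − ρ) is nonzero. -/
private lemma rpow_inj_aux {b : ℝ} (hb : 1 < b) {y z : ℝ} (h : b ^ y = b ^ z) : y = z := by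
  by_contra hne
  rcases lt_or_gt_of_ne hne with h1 | h1
  · exact absurd h (ne_of_lt ((Real.rpow_lt_rpow_left_iff hb).mpr h1))
  · exact absurd h (ne_of_gt ((Real.rpow_lt_rpow_left_iff hb).mpr h1))

theorem stmt_18 (b : ℝ) (hb : 1 < b) (D : ℕ) (hD : 1 ≤ D) (e : ℝ)
    (θ : ℕ → ℝ)
    (hθ : ∀ i : ℕ, θ i =
      b ^ (((D : ℝ) + e) / 2) / (b - 1) *
        (b ^ (((D : ℝ) - (i : ℝ)) / 2) - b ^ (((i : ℝ) - (D : ℝ)) / 2)))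
    (β ρ : ℝ) (hβ : β = b + b⁻¹) (hρ : ρ = b ^ (e + (D : ℝ) - 1) * (b + b⁻¹ + 2)) :
    ∀ i j : ℕ, i ≤ 2 * D → j ≤ 2 * D →
      i ≠ j → |(i : ℤ) - (j : ℤ)| ≠ 2 →
      (θ i - θ j) * (θ i ^ 2 + θ j ^ 2 - β * θ i * θ j - ρ) ≠ 0 := by
  have hb0 : (0 : ℝ) < b := lt_trans one_pos hb
  have hbm : (0 : ℝ) < b - 1 := sub_pos.mpr hb
  intro i j hi hj hij habs
  set K : ℝ := b ^ (((D : ℝ) + e) / 2) / (b - 1) with hK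
  have hK0 : 0 < K := div_pos (Real.rpow_pos_of_pos hb0 _) hbm
  set xi : ℝ := b ^ (((D : ℝ) - (i : ℝ)) / 2) with hxi
  set xj : ℝ := b ^ (((D : ℝ) - (j : ℝ)) / 2) with hxj
  have hxi0 : 0 < xi := Real.rpow_pos_of_pos hb0 _
  have hxj0 : 0 < xj := Real.rpow_pos_of_pos hb0 _
  have hθi : θ i = K * (xi - xi⁻¹) := by
    rw [hθ i, hxi,
      show ((i : ℝ) - (D : ℝ)) / 2 = -(((D : ℝ) - (i : ℝ)) / 2) by ring,
      Real.rpow_neg hb0.le]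
  have hθj : θ j = K * (xj - xj⁻¹) := by
    rw [hθ j, hxj,
      show ((j : ℝ) - (D : ℝ)) / 2 = -(((D : ℝ) - (j : ℝ)) / 2) by ring,
      Real.rpow_neg hb0.le]
  -- first factor is nonzero
  have h1 : θ i - θ j ≠ 0 := by
    intro h
    have h3 : xi - xi⁻¹ = xj - xj⁻¹ := by
      have := sub_eq_zero.mp (by rw [hθi, hθj] at h; exact h)
      exact mul_left_cancel₀ (ne_of_gt hK0) this
    have key : (xi - xi⁻¹) - (xj - xj⁻¹) = (xi - xj) * (1 + (xi * xj)⁻¹) := by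
      field_simp
      ring
    have h4 : (xi - xj) * (1 + (xi * xj)⁻¹) = 0 := by
      rw [← key]; rw [h3]; ring
    have h5 : xi = xj := by
      have hpos : 0 < 1 + (xi * xj)⁻¹ := by positivity
      have := (mul_eq_zero.mp h4).resolve_right (ne_of_gt hpos)
      linarith
    have := rpow_inj_aux hb
      (show b ^ (((D : ℝ) - (i : ℝ)) / 2) = b ^ (((D : ℝ) - (j : ℝ)) / 2) from h5)
    have hij' : (i : ℝ) = (j : ℝ) := by linarith
    exact hij (by exact_mod_cast hij')
  -- the value of ρ
  have hρ' : ρ = K ^ 2 * (b - b⁻¹) ^ 2 := by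
    have e1 : b ^ (e + (D : ℝ) - 1) = b ^ ((D : ℝ) + e) / b := by
      rw [show e + (D : ℝ) - 1 = ((D : ℝ) + e) - 1 by ring, Real.rpow_sub hb0,
        Real.rpow_one]
    have e2 : (b ^ (((D : ℝ) + e) / 2)) ^ 2 = b ^ ((D : ℝ) + e) := by
      rw [sq, ← Real.rpow_add hb0]
      norm_num
    rw [hρ, e1, hK, div_pow, e2]
    have hbne : b ≠ 0 := ne_of_gt hb0
    have hbm1 : b - 1 ≠ 0 := ne_of_gt hbm
    field_simp
    ring
  -- second factor factorization
  have key2 : θ i ^ 2 + θ j ^ 2 - β * θ i * θ j - ρ =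
      K ^ 2 * ((xi * xj + (xi * xj)⁻¹ + b + b⁻¹) * (xi / xj + xj / xi - b - b⁻¹)) := by
    rw [hθi, hθj, hβ, hρ']
    have hbne : b ≠ 0 := ne_of_gt hb0
    field_simp
    ring
  -- second factor is nonzero
  have hq : (0 : ℝ) < xi * xj + (xi * xj)⁻¹ + b + b⁻¹ := by positivity
  set r : ℝ := b ^ (((j : ℝ) - (i : ℝ)) / 2) with hrdef
  have hr0 : 0 < r := Real.rpow_pos_of_pos hb0 _
  have hrv : xi / xj = r := by
    rw [hxi, hxj, hrdef, ← Real.rpow_sub hb0]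
    ring_nf
  have hrv' : xj / xi = r⁻¹ := by
    rw [← hrv, inv_div]
  have hr : xi / xj + xj / xi - b - b⁻¹ ≠ 0 := by
    rw [hrv, hrv']
    intro h0
    have expand : r + r⁻¹ - b - b⁻¹ = (r - b) * (r * b - 1) / (r * b) := by
      field_simp
      ring
    have hz : (r - b) * (r * b - 1) = 0 := by
      have := expand ▸ h0
      exact (div_eq_zero_iff.mp this).resolve_right (by positivity)
    rcases mul_eq_zero.mp hz with h | h
    · have hrb : r = b := by linarith
      have : ((j : ℝ) - (i : ℝ)) / 2 = 1 :=
        rpow_inj_aux hb (by rw [← hrdef, hrb, Real.rpow_one])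
      have hji : (j : ℝ) = (i : ℝ) + 2 := by linarith
      have hj2 : j = i + 2 := by exact_mod_cast hji
      apply habs
      subst hj2
      push_cast
      rw [show (i : ℤ) - ((i : ℤ) + 2) = -2 by ring]
      norm_num
    · have hrb : r = b⁻¹ := by
        have : r * b = 1 := by linarith
        field_simp at this ⊢
        linarith
      have : ((j : ℝ) - (i : ℝ)) / 2 = -1 :=
        rpow_inj_aux hb (by rw [← hrdef, hrb, ← Real.rpow_neg_one])
      have hji : (i : ℝ) = (j : ℝ) + 2 := by linarith
      have hj2 : i = j + 2 := by exact_mod_cast hji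
      apply habs
      subst hj2
      push_cast
      rw [show ((j : ℤ) + 2) - (j : ℤ) = 2 by ring]
      norm_num
  have h2 : θ i ^ 2 + θ j ^ 2 - β * θ i * θ j - ρ ≠ 0 := by
    rw [key2]
    exact mul_ne_zero (pow_ne_zero _ (ne_of_gt hK0)) (mul_ne_zero (ne_of_gt hq) hr)
  exact mul_ne_zero h1 h2
end
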